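/- Let C be the coalgebra spanned by e and y_j (j ∈ ℤ) with Δ(e) = e⊗e, Δ(y_j) = e⊗y_j + y_j⊗e, ε(e) = 1, ε(y_j) = 0, and let A = k[x_i : i ∈ ℤ]/(x_i x_j : i,j ∈ ℤ). The linear map ψ: C⊗A → A⊗C determined by ψ(c⊗1) = 1⊗c, ψ(e⊗a) = a⊗e, ψ(y_j⊗x_i) = x_{i+1}⊗y_{j+1} is an entwining map. -/

import Mathlib

open TensorProduct LinearMap


/-- `ψ : C ⊗ A → A ⊗ C` is an entwining map, i.e. `(A, C)_ψ` is an entwining structure: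
(1) `ψ∘(id_C⊗μ) = (μ⊗id_C)∘(id_A⊗ψ)∘(ψ⊗id_A)`;
(2) `(id_A⊗Δ)∘ψ = (ψ⊗id_C)∘(id_C⊗ψ)∘(Δ⊗id_A)`;
(3) `ψ(c⊗1) = 1⊗c`; (4) `(id_A⊗ε)∘ψ = ε⊗id_A`. -/
def IsEntwining (k : Type*) {A C : Type*} [Field k] [Ring A] [Algebra k A]
    [AddCommGroup C] [Module k C] [Coalgebra k C]
    (ψ : C ⊗[k] A →ₗ[k] A ⊗[k] C) : Prop :=
  (∀ (c : C) (a b : A),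
    ψ (c ⊗ₜ[k] (a * b)) =
      (LinearMap.mul' k A).rTensor C
        ((TensorProduct.assoc k A A C).symm
          (ψ.lTensor A ((TensorProduct.assoc k A C A)
            (ψ.rTensor A ((c ⊗ₜ[k] a) ⊗ₜ[k] b)))))) ∧
  (∀ (c : C) (a : A),
    (Coalgebra.comul (R := k) (A := C)).lTensor A (ψ (c ⊗ₜ[k] a)) =
      (TensorProduct.assoc k A C C)
        (ψ.rTensor C ((TensorProduct.assoc k C A C).symm
          (ψ.lTensor C ((TensorProduct.assoc k C C A)
            ((Coalgebra.comul (R := k) (A := C)).rTensor A (c ⊗ₜ[k] a))))))) ∧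
  (∀ c : C, ψ (c ⊗ₜ[k] (1 : A)) = (1 : A) ⊗ₜ[k] c) ∧
  (∀ (c : C) (a : A),
    (Coalgebra.counit (R := k) (A := C)).lTensor A (ψ (c ⊗ₜ[k] a)) =
      a ⊗ₜ[k] Coalgebra.counit (R := k) c)

/-- Let `C` be the coalgebra with basis `{e} ∪ {y_j : j ∈ ℤ}`, with
`Δ(e) = e⊗e`, `Δ(y_j) = e⊗y_j + y_j⊗e`, `ε(e) = 1`, `ε(y_j) = 0`, and let
`A = k[x_i : i ∈ ℤ]/(x_i x_j)`, i.e. the algebra with basis `{1} ∪ {x_i : i ∈ ℤ}` and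
relations `x_i x_j = 0`. The linear map `ψ : C⊗A → A⊗C` determined by `ψ(c⊗1) = 1⊗c`,
`ψ(e⊗a) = a⊗e`, `ψ(y_j⊗x_i) = x_{i+1}⊗y_{j+1}` is an entwining map. -/
theorem stmt11 (k A C : Type*) [Field k] [Ring A] [Algebra k A]
    [AddCommGroup C] [Module k C] [Coalgebra k C]
    -- A has basis {1} ∪ {x_i : i ∈ ℤ} with relations x_i x_j = 0
    (x : ℤ → A)
    (hxbasis : LinearIndependent k (fun o : Option ℤ => o.elim (1 : A) x))
    (hxspan : Submodule.span k (Set.range (fun o : Option ℤ => o.elim (1 : A) x)) = ⊤)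
    (hxmul : ∀ i j : ℤ, x i * x j = 0)
    -- C has basis {e} ∪ {y_j : j ∈ ℤ}
    (e : C) (y : ℤ → C)
    (hybasis : LinearIndependent k (fun o : Option ℤ => o.elim e y))
    (hyspan : Submodule.span k (Set.range (fun o : Option ℤ => o.elim e y)) = ⊤)
    -- the coalgebra structure of C on this basis
    (hΔe : Coalgebra.comul (R := k) e = e ⊗ₜ[k] e)
    (hΔy : ∀ j : ℤ, Coalgebra.comul (R := k) (y j) = e ⊗ₜ[k] y j + y j ⊗ₜ[k] e)
    (hεe : Coalgebra.counit (R := k) e = 1)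
    (hεy : ∀ j : ℤ, Coalgebra.counit (R := k) (y j) = 0)
    -- the map ψ
    (ψ : C ⊗[k] A →ₗ[k] A ⊗[k] C)
    (hψ1 : ∀ c : C, ψ (c ⊗ₜ[k] (1 : A)) = (1 : A) ⊗ₜ[k] c)
    (hψe : ∀ a : A, ψ (e ⊗ₜ[k] a) = a ⊗ₜ[k] e)
    (hψyx : ∀ i j : ℤ, ψ (y j ⊗ₜ[k] x i) = x (i + 1) ⊗ₜ[k] y (j + 1)) :
    IsEntwining k ψ := by
  classical
  let bA : Module.Basis (Option ℤ) k A := Module.Basis.mk hxbasis (hxspan ▸ le_rfl)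
  let bC : Module.Basis (Option ℤ) k C := Module.Basis.mk hybasis (hyspan ▸ le_rfl)
  have hbA : ∀ o, bA o = o.elim (1 : A) x := fun o => Module.Basis.mk_apply _ _ o
  have hbC : ∀ o, bC o = o.elim e y := fun o => Module.Basis.mk_apply _ _ o
  refine ⟨?_, ?_, hψ1, ?_⟩
  · -- condition (1)
    have hmaps :
        (ψ ∘ₗ (LinearMap.mul' k A).lTensor C ∘ₗ ↑(TensorProduct.assoc k C A A)) =
        ((LinearMap.mul' k A).rTensor C ∘ₗ ↑(TensorProduct.assoc k A A C).symm ∘ₗ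
          ψ.lTensor A ∘ₗ ↑(TensorProduct.assoc k A C A) ∘ₗ ψ.rTensor A) := by
      apply ((bC.tensorProduct bA).tensorProduct bA).ext
      rintro ⟨⟨oc, oa⟩, ob⟩
      simp only [Module.Basis.tensorProduct_apply, hbA, hbC, LinearMap.comp_apply,
        LinearEquiv.coe_coe, TensorProduct.assoc_tmul, TensorProduct.assoc_symm_tmul,
        LinearMap.lTensor_tmul, LinearMap.rTensor_tmul, LinearMap.mul'_apply]
      rcases oc with _ | j <;> rcases oa with _ | i <;> rcases ob with _ | l <;>
        simp [hψ1, hψe, hψyx, hxmul, LinearMap.lTensor_tmul, LinearMap.rTensor_tmul,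
          TensorProduct.assoc_tmul, TensorProduct.assoc_symm_tmul, LinearMap.mul'_apply]
    intro c a b
    have := LinearMap.congr_fun hmaps ((c ⊗ₜ[k] a) ⊗ₜ[k] b)
    simpa only [LinearMap.comp_apply, LinearEquiv.coe_coe, TensorProduct.assoc_tmul,
      LinearMap.lTensor_tmul, LinearMap.mul'_apply] using this
  · -- condition (2)
    have hmaps :
        ((Coalgebra.comul (R := k) (A := C)).lTensor A ∘ₗ ψ) =
        (↑(TensorProduct.assoc k A C C) ∘ₗ ψ.rTensor C ∘ₗ
          ↑(TensorProduct.assoc k C A C).symm ∘ₗ ψ.lTensor C ∘ₗ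
          ↑(TensorProduct.assoc k C C A) ∘ₗ
          (Coalgebra.comul (R := k) (A := C)).rTensor A) := by
      apply (bC.tensorProduct bA).ext
      rintro ⟨oc, oa⟩
      simp only [Module.Basis.tensorProduct_apply, hbA, hbC]
      rcases oc with _ | j <;> rcases oa with _ | i <;>
        simp [hψ1, hψe, hψyx, hΔe, hΔy, LinearMap.lTensor_tmul, LinearMap.rTensor_tmul,
          TensorProduct.assoc_tmul, TensorProduct.assoc_symm_tmul,
          TensorProduct.tmul_add, TensorProduct.add_tmul]
    intro c a
    exact LinearMap.congr_fun hmaps (c ⊗ₜ[k] a)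
  · -- condition (4)
    have hmaps :
        ((Coalgebra.counit (R := k) (A := C)).lTensor A ∘ₗ ψ) =
        ((Coalgebra.counit (R := k) (A := C)).lTensor A ∘ₗ ψ ∘ₗ
          ↑(LinearEquiv.refl k (C ⊗[k] A))) := by rfl
    -- we prove the pointwise statement directly via a map equality
    have hmaps2 :
        ((Coalgebra.counit (R := k) (A := C)).lTensor A ∘ₗ ψ) =
        ((Coalgebra.counit (R := k) (A := C)).lTensor A ∘ₗ ↑(TensorProduct.comm k C A)) := by
      apply (bC.tensorProduct bA).ext
      rintro ⟨oc, oa⟩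
      simp only [Module.Basis.tensorProduct_apply, hbA, hbC]
      rcases oc with _ | j <;> rcases oa with _ | i <;>
        simp [hψ1, hψe, hψyx, hεe, hεy, LinearMap.lTensor_tmul]
    intro c a
    have := LinearMap.congr_fun hmaps2 (c ⊗ₜ[k] a)
    simpa only [LinearMap.comp_apply, LinearEquiv.coe_coe, TensorProduct.comm_tmul,
      LinearMap.lTensor_tmul] using this
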